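/- arXiv:2311.03330 — 4 statements merged into one kernel-verified Lean document; each statement's English description precedes it below -/
import Mathlib

section
/- For a quiver Q with subquiver F, the map G : 𝒢*_{n−1}(F) → 𝒢*_n(Q,F) defined on generators by g ↦ g, g* ↦ 0, h_v ↦ Σ_{e : v→•, e∉F₁} g_e g_e* − Σ_{e : •→v, e∉F₁} g_e* g_e (for v ∈ F₀), extended by linearity and multiplicativity, is a well-defined map of dg-algebras: it preserves degree and satisfies G ∘ d = d ∘ G. -/
/-- For a quiver `Q` with subquiver `F` (frozen predicates `F0, F1`), let
`AF` be the `(n-1)`-dimensional Ginzburg algebra `𝒢*_{n-1}(F)` (generators: arrows `gF e` of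
degree `0`, dual arrows `gsF e` of degree `3-n`, loops `hF v` of degree `2-n`, for `e, v` in
`F`) and let `AQ` be the `n`-dimensional relative Ginzburg algebra `𝒢*_n(Q,F)`.  Then the
algebra map `G : AF → AQ` determined on generators by `gF e ↦ g e`, `gsF e ↦ 0`,
`hF v ↦ ∑_{e : v→•, e∉F₁} g e * gs e − ∑_{e : •→v, e∉F₁} gs e * g e` is a well-defined map
of dg-algebras: it preserves degree and satisfies `G ∘ d = d ∘ G`. -/
theorem ginzburg_relative_inclusion_is_dga_map
    {k AF AQ : Type*} [Field k] [Ring AF] [Algebra k AF] [Ring AQ] [Algebra k AQ]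
    (𝒜F : ℤ → Submodule k AF) [GradedAlgebra 𝒜F]
    (𝒜Q : ℤ → Submodule k AQ) [GradedAlgebra 𝒜Q] (n : ℤ)
    (V E : Type*) [Fintype E] [DecidableEq V]
    (s t : E → V) (F0 : V → Prop) (F1 : E → Prop)
    [DecidablePred F0] [DecidablePred F1]
    (hFs : ∀ e, F1 e → F0 (s e)) (hFt : ∀ e, F1 e → F0 (t e))
    -- the (n-1)-dimensional Ginzburg algebra of F
    (idemF : {v // F0 v} → AF) (gF : {e // F1 e} → AF)
    (gsF : {e // F1 e} → AF) (hF : {v // F0 v} → AF)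
    (hidemFdeg : ∀ v, idemF v ∈ 𝒜F 0)
    (hgFdeg : ∀ e, gF e ∈ 𝒜F 0)
    (hgsFdeg : ∀ e, gsF e ∈ 𝒜F (3 - n))
    (hhFdeg : ∀ v, hF v ∈ 𝒜F (2 - n))
    (hgenF : Algebra.adjoin k
        (Set.range idemF ∪ Set.range gF ∪ Set.range gsF ∪ Set.range hF) = ⊤)
    (dF : AF →ₗ[k] AF)
    (hdFDeg : ∀ i : ℤ, ∀ x ∈ 𝒜F i, dF x ∈ 𝒜F (i + 1))
    (hLeibF : ∀ (i : ℤ) (x y : AF), x ∈ 𝒜F i →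
        dF (x * y) = dF x * y + (Int.negOnePow i : ℤ) • (x * dF y))
    (hdFidem : ∀ v, dF (idemF v) = 0)
    (hdFg : ∀ e, dF (gF e) = 0)
    (hdFgs : ∀ e, dF (gsF e) = 0)
    (hdFh : ∀ v, dF (hF v) =
        (∑ e ∈ Finset.univ.filter (fun e : {e // F1 e} => s e.1 = v.1), gF e * gsF e) -
        (∑ e ∈ Finset.univ.filter (fun e : {e // F1 e} => t e.1 = v.1), gsF e * gF e))
    -- the n-dimensional relative Ginzburg algebra of (Q,F)
    (idem : V → AQ) (g : E → AQ) (gs : E → AQ) (h : V → AQ)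
    (hidemdeg : ∀ v, idem v ∈ 𝒜Q 0)
    (hgdeg : ∀ e, g e ∈ 𝒜Q 0)
    (hgsdeg : ∀ e, ¬ F1 e → gs e ∈ 𝒜Q (2 - n))
    (hhdeg : ∀ v, ¬ F0 v → h v ∈ 𝒜Q (1 - n))
    (dQ : AQ →ₗ[k] AQ)
    (hdQDeg : ∀ i : ℤ, ∀ x ∈ 𝒜Q i, dQ x ∈ 𝒜Q (i + 1))
    (hLeibQ : ∀ (i : ℤ) (x y : AQ), x ∈ 𝒜Q i →
        dQ (x * y) = dQ x * y + (Int.negOnePow i : ℤ) • (x * dQ y))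
    (hdidem : ∀ v, dQ (idem v) = 0)
    (hdg : ∀ e, dQ (g e) = 0)
    (hdgs : ∀ e, ¬ F1 e → dQ (gs e) = 0)
    (hdh : ∀ v, ¬ F0 v →
        dQ (h v) =
          (∑ e ∈ Finset.univ.filter (fun e => s e = v ∧ ¬ F1 e), g e * gs e) -
          (∑ e ∈ Finset.univ.filter (fun e => t e = v ∧ ¬ F1 e), gs e * g e))
    -- the map G, determined by its values on generators
    (G : AF →ₐ[k] AQ)
    (hGidem : ∀ v, G (idemF v) = idem v.1)
    (hGg : ∀ e, G (gF e) = g e.1)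
    (hGgs : ∀ e, G (gsF e) = 0)
    (hGh : ∀ v, G (hF v) =
        (∑ e ∈ Finset.univ.filter (fun e => s e = v.1 ∧ ¬ F1 e), g e * gs e) -
        (∑ e ∈ Finset.univ.filter (fun e => t e = v.1 ∧ ¬ F1 e), gs e * g e)) :
    (∀ i : ℤ, ∀ x ∈ 𝒜F i, G x ∈ 𝒜Q i) ∧ (∀ x : AF, G (dF x) = dQ (G x)) := by
  classical
  -- d of 1 is 0 in both algebras
  have hdF1 : dF 1 = 0 := by
    have h1 : (1 : AF) ∈ 𝒜F 0 := SetLike.one_mem_graded _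
    have := hLeibF 0 1 1 h1
    simp only [one_mul, mul_one, Int.negOnePow_zero, Units.val_one, one_smul] at this
    exact (left_eq_add.mp this)
  have hdQ1 : dQ 1 = 0 := by
    have h1 : (1 : AQ) ∈ 𝒜Q 0 := SetLike.one_mem_graded _
    have := hLeibQ 0 1 1 h1
    simp only [one_mul, mul_one, Int.negOnePow_zero, Units.val_one, one_smul] at this
    exact (left_eq_add.mp this)
  -- the defect linear map
  set D : AF →ₗ[k] AQ :=
    G.toLinearMap ∘ₗ dF - dQ ∘ₗ G.toLinearMap with hDdef
  have hD : ∀ x : AF, D x = G (dF x) - dQ (G x) := fun x => rfl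
  -- graded pieces of "good" elements
  set M : ℤ → Submodule k AF := fun i =>
    (𝒜F i ⊓ (𝒜Q i).comap G.toLinearMap) ⊓ LinearMap.ker D with hMdef
  have hMmem : ∀ (i : ℤ) (x : AF),
      x ∈ M i ↔ x ∈ 𝒜F i ∧ G x ∈ 𝒜Q i ∧ G (dF x) = dQ (G x) := by
    intro i x
    simp only [hMdef, Submodule.mem_inf, Submodule.mem_comap, LinearMap.mem_ker, hD,
      sub_eq_zero, AlgHom.toLinearMap_apply, and_assoc]
  -- multiplicativity of the good pieces
  have hMmul : ∀ (i j : ℤ) (x y : AF), x ∈ M i → y ∈ M j → x * y ∈ M (i + j) := by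
    intro i j x y hx hy
    rw [hMmem] at hx hy ⊢
    obtain ⟨hx1, hx2, hx3⟩ := hx
    obtain ⟨hy1, hy2, hy3⟩ := hy
    refine ⟨SetLike.mul_mem_graded hx1 hy1, ?_, ?_⟩
    · rw [map_mul]; exact SetLike.mul_mem_graded hx2 hy2
    · rw [show G (x * y) = G x * G y from map_mul G x y,
        hLeibQ i (G x) (G y) hx2, hLeibF i x y hx1, map_add, map_mul, map_zsmul,
        map_mul, hx3, hy3]
  have hM1 : (1 : AF) ∈ M 0 := by
    rw [hMmem]
    exact ⟨SetLike.one_mem_graded _, by rw [map_one]; exact SetLike.one_mem_graded _,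
      by rw [hdF1, map_zero, map_one, hdQ1]⟩
  -- the generators are good
  have hMidem : ∀ v, idemF v ∈ M 0 := by
    intro v
    rw [hMmem]
    exact ⟨hidemFdeg v, by rw [hGidem]; exact hidemdeg _,
      by rw [hdFidem, map_zero, hGidem, hdidem]⟩
  have hMg : ∀ e, gF e ∈ M 0 := by
    intro e
    rw [hMmem]
    exact ⟨hgFdeg e, by rw [hGg]; exact hgdeg _, by rw [hdFg, map_zero, hGg, hdg]⟩
  have hMgs : ∀ e, gsF e ∈ M (3 - n) := by
    intro e
    rw [hMmem]
    exact ⟨hgsFdeg e, by rw [hGgs]; exact zero_mem _,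
      by rw [hdFgs, map_zero, hGgs, map_zero]⟩
  have hMh : ∀ v, hF v ∈ M (2 - n) := by
    intro v
    rw [hMmem]
    refine ⟨hhFdeg v, ?_, ?_⟩
    · rw [hGh]
      refine sub_mem (Submodule.sum_mem _ ?_) (Submodule.sum_mem _ ?_)
      · intro e he
        rw [Finset.mem_filter] at he
        have : (0 : ℤ) + (2 - n) = 2 - n := by ring
        exact this ▸ SetLike.mul_mem_graded (hgdeg e) (hgsdeg e he.2.2)
      · intro e he
        rw [Finset.mem_filter] at he
        have : (2 - n) + (0 : ℤ) = 2 - n := by ring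
        exact this ▸ SetLike.mul_mem_graded (hgsdeg e he.2.2) (hgdeg e)
    · rw [hdFh, map_sub, map_sum, map_sum]
      have hL : ∀ e : {e // F1 e}, G (gF e * gsF e) = 0 := by
        intro e; rw [map_mul, hGgs, mul_zero]
      have hR : ∀ e : {e // F1 e}, G (gsF e * gF e) = 0 := by
        intro e; rw [map_mul, hGgs, zero_mul]
      rw [Finset.sum_congr rfl (fun e _ => hL e), Finset.sum_congr rfl (fun e _ => hR e)]
      rw [hGh, map_sub, map_sum, map_sum]
      have hL' : ∀ e ∈ Finset.univ.filter (fun e => s e = v.1 ∧ ¬ F1 e),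
          dQ (g e * gs e) = 0 := by
        intro e he
        rw [Finset.mem_filter] at he
        rw [hLeibQ 0 (g e) (gs e) (hgdeg e), hdg, zero_mul, hdgs e he.2.2,
          mul_zero, smul_zero, add_zero]
      have hR' : ∀ e ∈ Finset.univ.filter (fun e => t e = v.1 ∧ ¬ F1 e),
          dQ (gs e * g e) = 0 := by
        intro e he
        rw [Finset.mem_filter] at he
        rw [hLeibQ (2 - n) (gs e) (g e) (hgsdeg e he.2.2), hdgs e he.2.2, zero_mul,
          hdg, mul_zero, smul_zero, add_zero]
      rw [Finset.sum_congr rfl hL', Finset.sum_congr rfl hR']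
      simp
  -- every element has all its homogeneous components good
  have key : ∀ x : AF, ∀ i : ℤ, (DirectSum.decompose 𝒜F x i : AF) ∈ M i := by
    have homog : ∀ (w : AF) (d : ℤ), w ∈ 𝒜F d → w ∈ M d →
        ∀ i : ℤ, (DirectSum.decompose 𝒜F w i : AF) ∈ M i := by
      intro w d hwd hwM i
      by_cases hid : i = d
      · subst hid
        rw [DirectSum.decompose_of_mem_same 𝒜F hwd]
        exact hwM
      · rw [DirectSum.decompose_of_mem_ne 𝒜F hwd (fun hh => hid hh.symm)]
        exact zero_mem _
    intro x
    have hx : x ∈ Algebra.adjoin k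
        (Set.range idemF ∪ Set.range gF ∪ Set.range gsF ∪ Set.range hF) := by
      rw [hgenF]; trivial
    induction hx using Algebra.adjoin_induction with
    | mem w hw =>
        rcases hw with ((⟨v, rfl⟩ | ⟨e, rfl⟩) | ⟨e, rfl⟩) | ⟨v, rfl⟩
        · exact homog _ 0 (hidemFdeg v) (hMidem v)
        · exact homog _ 0 (hgFdeg e) (hMg e)
        · exact homog _ (3 - n) (hgsFdeg e) (hMgs e)
        · exact homog _ (2 - n) (hhFdeg v) (hMh v)
    | algebraMap r =>
        have hr0 : (algebraMap k AF) r ∈ 𝒜F 0 := SetLike.algebraMap_mem_graded _ r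
        have hrM : (algebraMap k AF) r ∈ M 0 := by
          have h1 : (algebraMap k AF) r = r • (1 : AF) := by
            rw [Algebra.smul_def, mul_one]
          rw [h1]
          exact Submodule.smul_mem _ r hM1
        exact homog _ 0 hr0 hrM
    | add x y hx hy ihx ihy =>
        intro i
        rw [DirectSum.decompose_add]
        have : ((DirectSum.decompose 𝒜F x + DirectSum.decompose 𝒜F y) i : AF)
            = (DirectSum.decompose 𝒜F x i : AF) + (DirectSum.decompose 𝒜F y i : AF) := by
          simp
        rw [this]
        exact add_mem (ihx i) (ihy i)
    | mul x y hx hy ihx ihy =>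
        intro i
        rw [DirectSum.decompose_mul]
        rw [DirectSum.coe_mul_apply]
        refine Submodule.sum_mem _ ?_
        intro ij hij
        rw [Finset.mem_filter] at hij
        rw [← hij.2]
        exact hMmul _ _ _ _ (ihx ij.1) (ihy ij.2)
  constructor
  · intro i x hx
    have := key x i
    rw [DirectSum.decompose_of_mem_same 𝒜F hx] at this
    exact ((hMmem i x).mp this).2.1
  · intro x
    have hDx : D x = 0 := by
      have hsum := DirectSum.sum_support_decompose 𝒜F x
      calc D x = D (∑ i ∈ (DirectSum.decompose 𝒜F x).support,
            (DirectSum.decompose 𝒜F x i : AF)) := by rw [hsum]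
        _ = ∑ i ∈ (DirectSum.decompose 𝒜F x).support,
            D (DirectSum.decompose 𝒜F x i : AF) := map_sum D _ _
        _ = 0 := by
            refine Finset.sum_eq_zero fun i _ => ?_
            have := key x i
            rw [hMmem] at this
            rw [hD, this.2.2, sub_self]
    have := hD x
    rw [hDx] at this
    exact (sub_eq_zero.mp this.symm)
end

section
/- With 𝒜 and 𝒢*_n(Q) as above (case F = ∅), the map φ : 𝒢*_n(Q) → 𝒜 defined on generators by φ(h_v) = a_v − Σ_{e ∋ v} a_{e,v}, φ(g_e) = g_e, φ(g_e*) = g_e*, extended by linearity and multiplicativity, is a chain map of dg-algebras, and the composition τ ∘ φ equals the identity on 𝒢*_n(Q). -/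
/-!
All three assertions are checked on generators and propagated to the whole algebra. The
homogeneous elements on which a property holds form a graded family closed under products
(for commuting with the differentials this is the graded Leibniz rule, which needs `φ` to be
graded first), and such a family containing a generating set spans everything. On generators
only `h_v` needs a computation: in `∂(a_v − ∑ a_{e,v})` the terms `b_{e,v}` cancel and what
remains is `φ(∂h_v) = ∑_{s e = v} g_e g_e* − ∑_{t e = v} g_e* g_e`.
-/

open Finset

section GradedFamily

variable {ι R A : Type*} [AddMonoid ι] [DecidableEq ι]

theorem Submodule.iSup_eq_top_of_adjoin_eq_top [CommSemiring R] [Semiring A] [Algebra R A]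
    (M : ι → Submodule R A) [SetLike.GradedMonoid M] {S : Set A} (hS : ∀ s ∈ S, ∃ i, s ∈ M i)
    (hadj : Algebra.adjoin R S = ⊤) : ⨆ i, M i = ⊤ := by
  have hrange : (DirectSum.coeAlgHom M).range = ⊤ := by
    rw [eq_top_iff, ← hadj, Algebra.adjoin_le_iff]
    intro s hs
    obtain ⟨i, hi⟩ := hS s hs
    exact ⟨DirectSum.of (fun i => M i) i ⟨s, hi⟩, DirectSum.coeAlgHom_of M i _⟩
  rw [Submodule.iSup_eq_toSubmodule_range, hrange, Algebra.top_toSubmodule]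

theorem SetLike.GradedMonoid.eq_of_le_of_adjoin_eq_top [CommRing R] [Ring A] [Algebra R A]
    (𝒜 : ι → Submodule R A) [GradedAlgebra 𝒜] (M : ι → Submodule R A)
    [SetLike.GradedMonoid M] (hle : M ≤ 𝒜) {S : Set A} (hS : ∀ s ∈ S, ∃ i, s ∈ M i)
    (hadj : Algebra.adjoin R S = ⊤) : M = 𝒜 :=
  ((DirectSum.Decomposition.isInternal 𝒜).submodule_iSupIndep.le_iff_eq_of_iSup_eq_top
    (Submodule.iSup_eq_top_of_adjoin_eq_top M hS hadj)).1 hle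

end GradedFamily

section GradedAlgHom

variable {ι R A B : Type*} [AddMonoid ι] [DecidableEq ι] [CommRing R]
  [Ring A] [Algebra R A] [Semiring B] [Algebra R B]

theorem AlgHom.map_mem_of_adjoin_eq_top (𝒜 : ι → Submodule R A) [GradedAlgebra 𝒜]
    (ℬ : ι → Submodule R B) [SetLike.GradedMonoid ℬ] (φ : A →ₐ[R] B) {S : Set A}
    (hS : ∀ s ∈ S, ∃ i, s ∈ 𝒜 i ∧ φ s ∈ ℬ i) (hadj : Algebra.adjoin R S = ⊤) :
    ∀ i, ∀ x ∈ 𝒜 i, φ x ∈ ℬ i := by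
  let M i := 𝒜 i ⊓ (ℬ i).comap φ.toLinearMap
  have : SetLike.GradedMonoid M :=
    { one_mem := ⟨SetLike.one_mem_graded 𝒜, by simpa using SetLike.one_mem_graded ℬ⟩
      mul_mem := fun _ _ _ _ hx hy =>
        ⟨SetLike.mul_mem_graded hx.1 hy.1, by
          simpa using SetLike.mul_mem_graded (A := ℬ) hx.2 hy.2⟩ }
  have hM : M = 𝒜 := SetLike.GradedMonoid.eq_of_le_of_adjoin_eq_top 𝒜 M
    (fun _ => inf_le_left) hS hadj
  intro i x hx
  rw [← hM] at hx
  exact hx.2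

end GradedAlgHom

section GradedLeibniz

variable {R A B : Type*} [CommSemiring R] [Ring A] [Algebra R A] [Ring B] [Algebra R B]

def GradedLeibniz (𝒜 : ℤ → Submodule R A) (d : A →ₗ[R] A) : Prop :=
  ∀ (i : ℤ) (x y : A), x ∈ 𝒜 i → d (x * y) = d x * y + (Int.negOnePow i : ℤ) • (x * d y)

theorem GradedLeibniz.map_one {𝒜 : ℤ → Submodule R A} {d : A →ₗ[R] A}
    (hd : GradedLeibniz 𝒜 d) (h1 : (1 : A) ∈ 𝒜 0) : d 1 = 0 := by
  simpa using hd 0 1 1 h1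

theorem AlgHom.map_comp_eq_of_adjoin_eq_top (𝒜 : ℤ → Submodule R A) [SetLike.GradedMonoid 𝒜]
    (ℬ : ℤ → Submodule R B) (φ : A →ₐ[R] B) (hφ : ∀ i, ∀ x ∈ 𝒜 i, φ x ∈ ℬ i)
    {dA : A →ₗ[R] A} {dB : B →ₗ[R] B} (hdA : GradedLeibniz 𝒜 dA) (hdB : GradedLeibniz ℬ dB)
    {S : Set A} (hS : ∀ s ∈ S, ∃ i, s ∈ 𝒜 i) (hdS : ∀ s ∈ S, φ (dA s) = dB (φ s))
    (hadj : Algebra.adjoin R S = ⊤) : ∀ x, φ (dA x) = dB (φ x) := by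
  let M i := 𝒜 i ⊓ LinearMap.eqLocus (φ.toLinearMap ∘ₗ dA) (dB ∘ₗ φ.toLinearMap)
  have h1A : (1 : A) ∈ 𝒜 0 := SetLike.one_mem_graded 𝒜
  have h1B : (1 : B) ∈ ℬ 0 := by simpa using hφ 0 1 h1A
  have : SetLike.GradedMonoid M :=
    { one_mem := ⟨h1A, by simp [hdA.map_one h1A, hdB.map_one h1B]⟩
      mul_mem := fun i _ x y hx hy => by
        refine ⟨SetLike.mul_mem_graded hx.1 hy.1, ?_⟩
        have hx' : φ (dA x) = dB (φ x) := hx.2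
        have hy' : φ (dA y) = dB (φ y) := hy.2
        change φ (dA (x * y)) = dB (φ (x * y))
        rw [hdA i x y hx.1, map_mul, hdB i _ _ (hφ i x hx.1), map_add, map_zsmul, map_mul,
          map_mul, hx', hy'] }
  have htop := Submodule.iSup_eq_top_of_adjoin_eq_top M
    (fun s hs => (hS s hs).imp fun _ hs' => ⟨hs', hdS s hs⟩) hadj
  intro x
  have hx : x ∈ ⨆ i, M i := htop ▸ Submodule.mem_top
  exact (iSup_le fun i => inf_le_right : ⨆ i, M i ≤ _) hx

end GradedLeibniz

theorem phi_is_chain_map_and_tau_phi_id_general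
    {k AA AG : Type*} [Field k] [Ring AA] [Algebra k AA] [Ring AG] [Algebra k AG]
    (𝒜 : ℤ → Submodule k AA) [GradedAlgebra 𝒜]
    (𝒢 : ℤ → Submodule k AG) [GradedAlgebra 𝒢] (n : ℤ)
    (V E : Type*) [Fintype E] [DecidableEq V]
    (s t : E → V)
    -- the Chekanov–Eliashberg dg-algebra 𝒜
    (idemA : V → AA) (a : V → AA) (a1 a2 b1 b2 gA gsA : E → AA)
    (hidemAdeg : ∀ v, idemA v ∈ 𝒜 0)
    (hadeg : ∀ v, a v ∈ 𝒜 (1 - n))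
    (ha1deg : ∀ e, a1 e ∈ 𝒜 (1 - n)) (ha2deg : ∀ e, a2 e ∈ 𝒜 (1 - n))
    (hgAdeg : ∀ e, gA e ∈ 𝒜 0) (hgsAdeg : ∀ e, gsA e ∈ 𝒜 (2 - n))
    (dA : AA →ₗ[k] AA)
    (hLeibA : ∀ (i : ℤ) (x y : AA), x ∈ 𝒜 i →
        dA (x * y) = dA x * y + (Int.negOnePow i : ℤ) • (x * dA y))
    (hdAidem : ∀ v, dA (idemA v) = 0)
    (hdAa : ∀ v, dA (a v) =
        (∑ e ∈ Finset.univ.filter (fun e => s e = v), b1 e) +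
        (∑ e ∈ Finset.univ.filter (fun e => t e = v), b2 e))
    (hdAa1 : ∀ e, dA (a1 e) = b1 e - gA e * gsA e)
    (hdAa2 : ∀ e, dA (a2 e) = b2 e + gsA e * gA e)
    (hdAg : ∀ e, dA (gA e) = 0) (hdAgs : ∀ e, dA (gsA e) = 0)
    -- the n-dimensional Ginzburg algebra 𝒢*_n(Q)
    (idem : V → AG) (g : E → AG) (gs : E → AG) (h : V → AG)
    (hidemdeg : ∀ v, idem v ∈ 𝒢 0)
    (hgdeg : ∀ e, g e ∈ 𝒢 0) (hgsdeg : ∀ e, gs e ∈ 𝒢 (2 - n))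
    (hhdeg : ∀ v, h v ∈ 𝒢 (1 - n))
    (hgenG : Algebra.adjoin k
        (Set.range idem ∪ Set.range g ∪ Set.range gs ∪ Set.range h) = ⊤)
    (dG : AG →ₗ[k] AG)
    (hLeibG : ∀ (i : ℤ) (x y : AG), x ∈ 𝒢 i →
        dG (x * y) = dG x * y + (Int.negOnePow i : ℤ) • (x * dG y))
    (hdGidem : ∀ v, dG (idem v) = 0)
    (hdGg : ∀ e, dG (g e) = 0) (hdGgs : ∀ e, dG (gs e) = 0)
    (hdGh : ∀ v, dG (h v) =
        (∑ e ∈ Finset.univ.filter (fun e => s e = v), g e * gs e) -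
        (∑ e ∈ Finset.univ.filter (fun e => t e = v), gs e * g e))
    -- the map τ : 𝒜 → 𝒢*_n(Q), determined by its values on generators
    (τ : AA →ₐ[k] AG)
    (hτidem : ∀ v, τ (idemA v) = idem v)
    (hτa : ∀ v, τ (a v) = h v)
    (hτa1 : ∀ e, τ (a1 e) = 0) (hτa2 : ∀ e, τ (a2 e) = 0)
    (hτg : ∀ e, τ (gA e) = g e) (hτgs : ∀ e, τ (gsA e) = gs e)
    -- the map φ : 𝒢*_n(Q) → 𝒜, determined by its values on generators
    (φ : AG →ₐ[k] AA)
    (hφidem : ∀ v, φ (idem v) = idemA v)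
    (hφh : ∀ v, φ (h v) = a v -
        ((∑ e ∈ Finset.univ.filter (fun e => s e = v), a1 e) +
         (∑ e ∈ Finset.univ.filter (fun e => t e = v), a2 e)))
    (hφg : ∀ e, φ (g e) = gA e) (hφgs : ∀ e, φ (gs e) = gsA e)
    :
    (∀ i : ℤ, ∀ x ∈ 𝒢 i, φ x ∈ 𝒜 i) ∧ (∀ x : AG, φ (dG x) = dA (φ x)) ∧
      (∀ x : AG, τ (φ x) = x) := by
  have hgen_deg : ∀ x ∈ Set.range idem ∪ Set.range g ∪ Set.range gs ∪ Set.range h,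
      ∃ i, x ∈ 𝒢 i ∧ φ x ∈ 𝒜 i := by
    rintro _ (((⟨v, rfl⟩ | ⟨e, rfl⟩) | ⟨e, rfl⟩) | ⟨v, rfl⟩)
    · exact ⟨0, hidemdeg v, hφidem v ▸ hidemAdeg v⟩
    · exact ⟨0, hgdeg e, hφg e ▸ hgAdeg e⟩
    · exact ⟨2 - n, hgsdeg e, hφgs e ▸ hgsAdeg e⟩
    · refine ⟨1 - n, hhdeg v, ?_⟩
      rw [hφh]
      exact sub_mem (hadeg v) (add_mem (sum_mem fun e _ => ha1deg e) (sum_mem fun e _ => ha2deg e))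
  have hgraded := φ.map_mem_of_adjoin_eq_top 𝒢 𝒜 hgen_deg hgenG
  refine ⟨hgraded, φ.map_comp_eq_of_adjoin_eq_top 𝒢 𝒜 hgraded hLeibG hLeibA
    (fun x hx => (hgen_deg x hx).imp fun _ => And.left) ?_ hgenG, ?_⟩
  · rintro _ (((⟨v, rfl⟩ | ⟨e, rfl⟩) | ⟨e, rfl⟩) | ⟨v, rfl⟩)
    · rw [hdGidem, map_zero, hφidem, hdAidem]
    · rw [hdGg, map_zero, hφg, hdAg]
    · rw [hdGgs, map_zero, hφgs, hdAgs]
    · simp only [hdGh, hφh, map_sub, map_add, map_sum, map_mul, hφg, hφgs, hdAa, hdAa1, hdAa2,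
        sum_sub_distrib, sum_add_distrib]
      abel
  · have hτφ : τ.comp φ = AlgHom.id k AG := by
      refine AlgHom.ext_of_adjoin_eq_top hgenG ?_
      rintro _ (((⟨v, rfl⟩ | ⟨e, rfl⟩) | ⟨e, rfl⟩) | ⟨v, rfl⟩)
      · simp [hφidem, hτidem]
      · simp [hφg, hτg]
      · simp [hφgs, hτgs]
      · simp [hφh, hτa, hτa1, hτa2]
    exact AlgHom.congr_fun hτφ

/-- With the Chekanov–Eliashberg dg-algebra `𝒜` and the Ginzburg algebra
`𝒢*_n(Q)` as in Statement 3 (case `F = ∅`), the algebra map `φ : 𝒢*_n(Q) → 𝒜` determined by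
`φ(h_v) = a_v − ∑_{e ∋ v} a_{e,v}`, `φ(g_e) = g_e`, `φ(g_e*) = g_e*` is a chain map of
dg-algebras (degree preserving and commuting with the differentials), and `τ ∘ φ` is the
identity on `𝒢*_n(Q)`. -/
theorem phi_is_chain_map_and_tau_phi_id
    {k AA AG : Type*} [Field k] [Ring AA] [Algebra k AA] [Ring AG] [Algebra k AG]
    (𝒜 : ℤ → Submodule k AA) [GradedAlgebra 𝒜]
    (𝒢 : ℤ → Submodule k AG) [GradedAlgebra 𝒢] (n : ℤ)
    (V E : Type*) [Fintype E] [DecidableEq V]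
    (s t : E → V)
    -- the Chekanov–Eliashberg dg-algebra 𝒜
    (idemA : V → AA) (a : V → AA) (a1 a2 b1 b2 gA gsA : E → AA)
    (hidemAdeg : ∀ v, idemA v ∈ 𝒜 0)
    (hadeg : ∀ v, a v ∈ 𝒜 (1 - n))
    (ha1deg : ∀ e, a1 e ∈ 𝒜 (1 - n)) (ha2deg : ∀ e, a2 e ∈ 𝒜 (1 - n))
    (hb1deg : ∀ e, b1 e ∈ 𝒜 (2 - n)) (hb2deg : ∀ e, b2 e ∈ 𝒜 (2 - n))
    (hgAdeg : ∀ e, gA e ∈ 𝒜 0) (hgsAdeg : ∀ e, gsA e ∈ 𝒜 (2 - n))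
    (hgenA : Algebra.adjoin k
        (Set.range idemA ∪ Set.range a ∪ Set.range a1 ∪ Set.range a2 ∪
          Set.range b1 ∪ Set.range b2 ∪ Set.range gA ∪ Set.range gsA) = ⊤)
    (dA : AA →ₗ[k] AA)
    (hdADeg : ∀ i : ℤ, ∀ x ∈ 𝒜 i, dA x ∈ 𝒜 (i + 1))
    (hLeibA : ∀ (i : ℤ) (x y : AA), x ∈ 𝒜 i →
        dA (x * y) = dA x * y + (Int.negOnePow i : ℤ) • (x * dA y))
    (hdAidem : ∀ v, dA (idemA v) = 0)
    (hdAa : ∀ v, dA (a v) =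
        (∑ e ∈ Finset.univ.filter (fun e => s e = v), b1 e) +
        (∑ e ∈ Finset.univ.filter (fun e => t e = v), b2 e))
    (hdAa1 : ∀ e, dA (a1 e) = b1 e - gA e * gsA e)
    (hdAa2 : ∀ e, dA (a2 e) = b2 e + gsA e * gA e)
    (hdAb1 : ∀ e, dA (b1 e) = 0) (hdAb2 : ∀ e, dA (b2 e) = 0)
    (hdAg : ∀ e, dA (gA e) = 0) (hdAgs : ∀ e, dA (gsA e) = 0)
    -- the n-dimensional Ginzburg algebra 𝒢*_n(Q)
    (idem : V → AG) (g : E → AG) (gs : E → AG) (h : V → AG)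
    (hidemdeg : ∀ v, idem v ∈ 𝒢 0)
    (hgdeg : ∀ e, g e ∈ 𝒢 0) (hgsdeg : ∀ e, gs e ∈ 𝒢 (2 - n))
    (hhdeg : ∀ v, h v ∈ 𝒢 (1 - n))
    (hgenG : Algebra.adjoin k
        (Set.range idem ∪ Set.range g ∪ Set.range gs ∪ Set.range h) = ⊤)
    (dG : AG →ₗ[k] AG)
    (hdGDeg : ∀ i : ℤ, ∀ x ∈ 𝒢 i, dG x ∈ 𝒢 (i + 1))
    (hLeibG : ∀ (i : ℤ) (x y : AG), x ∈ 𝒢 i →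
        dG (x * y) = dG x * y + (Int.negOnePow i : ℤ) • (x * dG y))
    (hdGidem : ∀ v, dG (idem v) = 0)
    (hdGg : ∀ e, dG (g e) = 0) (hdGgs : ∀ e, dG (gs e) = 0)
    (hdGh : ∀ v, dG (h v) =
        (∑ e ∈ Finset.univ.filter (fun e => s e = v), g e * gs e) -
        (∑ e ∈ Finset.univ.filter (fun e => t e = v), gs e * g e))
    -- the map τ : 𝒜 → 𝒢*_n(Q), determined by its values on generators
    (τ : AA →ₐ[k] AG)
    (hτidem : ∀ v, τ (idemA v) = idem v)
    (hτa : ∀ v, τ (a v) = h v)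
    (hτa1 : ∀ e, τ (a1 e) = 0) (hτa2 : ∀ e, τ (a2 e) = 0)
    (hτb1 : ∀ e, τ (b1 e) = g e * gs e)
    (hτb2 : ∀ e, τ (b2 e) = -(gs e * g e))
    (hτg : ∀ e, τ (gA e) = g e) (hτgs : ∀ e, τ (gsA e) = gs e)
    -- the map φ : 𝒢*_n(Q) → 𝒜, determined by its values on generators
    (φ : AG →ₐ[k] AA)
    (hφidem : ∀ v, φ (idem v) = idemA v)
    (hφh : ∀ v, φ (h v) = a v -
        ((∑ e ∈ Finset.univ.filter (fun e => s e = v), a1 e) +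
         (∑ e ∈ Finset.univ.filter (fun e => t e = v), a2 e)))
    (hφg : ∀ e, φ (g e) = gA e) (hφgs : ∀ e, φ (gs e) = gsA e)
    :
    (∀ i : ℤ, ∀ x ∈ 𝒢 i, φ x ∈ 𝒜 i) ∧ (∀ x : AG, φ (dG x) = dA (φ x)) ∧
      (∀ x : AG, τ (φ x) = x) :=
  phi_is_chain_map_and_tau_phi_id_general 𝒜 𝒢 n V E s t idemA a a1 a2 b1 b2 gA gsA hidemAdeg hadeg
    ha1deg ha2deg hgAdeg hgsAdeg dA hLeibA hdAidem hdAa hdAa1 hdAa2 hdAg hdAgs idem g gs h hidemdeg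
    hgdeg hgsdeg hhdeg hgenG dG hLeibG hdGidem hdGg hdGgs hdGh τ hτidem hτa hτa1 hτa2 hτg hτgs φ
    hφidem hφh hφg hφgs
end

section
/- With 𝒜, τ, φ as above (case F = ∅), let K : 𝒜 → 𝒜 be the degree −1 map defined on generators by K(b_{e,v}) = a_{e,v}, K of all other generators = 0, extended by linearity and as an (id, φτ)-derivation: K(xy) = K(x)y + (−1)^{|x|}(φτ)(x)K(y) [with appropriate sign convention]. Then K is a chain homotopy from φτ to the identity: ∂K + K∂ = id − φτ on 𝒜. -/
/-- With `𝒜`, `τ`, `φ` as in Statements 3 and 4 (case `F = ∅`), let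
`K : 𝒜 → 𝒜` be the degree `-1` linear map determined on generators by `K(b_{e,v}) = a_{e,v}`
and `K = 0` on all other generators, extended as an `(id, φτ)`-derivation
`K(xy) = K(x)·(φτ)(y) + (−1)^{|x|} x·K(y)`.  Then `K` is a chain homotopy from `φτ` to the
identity: `∂K + K∂ = id − φτ` on `𝒜`. -/
theorem K_is_chain_homotopy
    {k AA AG : Type*} [Field k] [Ring AA] [Algebra k AA] [Ring AG] [Algebra k AG]
    (𝒜 : ℤ → Submodule k AA) [GradedAlgebra 𝒜]
    (𝒢 : ℤ → Submodule k AG) [GradedAlgebra 𝒢] (n : ℤ)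
    (V E : Type*) [Fintype E] [DecidableEq V]
    (s t : E → V)
    -- the Chekanov–Eliashberg dg-algebra 𝒜
    (idemA : V → AA) (a : V → AA) (a1 a2 b1 b2 gA gsA : E → AA)
    (hidemAdeg : ∀ v, idemA v ∈ 𝒜 0)
    (hadeg : ∀ v, a v ∈ 𝒜 (1 - n))
    (ha1deg : ∀ e, a1 e ∈ 𝒜 (1 - n)) (ha2deg : ∀ e, a2 e ∈ 𝒜 (1 - n))
    (hb1deg : ∀ e, b1 e ∈ 𝒜 (2 - n)) (hb2deg : ∀ e, b2 e ∈ 𝒜 (2 - n))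
    (hgAdeg : ∀ e, gA e ∈ 𝒜 0) (hgsAdeg : ∀ e, gsA e ∈ 𝒜 (2 - n))
    (hgenA : Algebra.adjoin k
        (Set.range idemA ∪ Set.range a ∪ Set.range a1 ∪ Set.range a2 ∪
          Set.range b1 ∪ Set.range b2 ∪ Set.range gA ∪ Set.range gsA) = ⊤)
    (dA : AA →ₗ[k] AA)
    (hdADeg : ∀ i : ℤ, ∀ x ∈ 𝒜 i, dA x ∈ 𝒜 (i + 1))
    (hLeibA : ∀ (i : ℤ) (x y : AA), x ∈ 𝒜 i →
        dA (x * y) = dA x * y + (Int.negOnePow i : ℤ) • (x * dA y))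
    (hdAidem : ∀ v, dA (idemA v) = 0)
    (hdAa : ∀ v, dA (a v) =
        (∑ e ∈ Finset.univ.filter (fun e => s e = v), b1 e) +
        (∑ e ∈ Finset.univ.filter (fun e => t e = v), b2 e))
    (hdAa1 : ∀ e, dA (a1 e) = b1 e - gA e * gsA e)
    (hdAa2 : ∀ e, dA (a2 e) = b2 e + gsA e * gA e)
    (hdAb1 : ∀ e, dA (b1 e) = 0) (hdAb2 : ∀ e, dA (b2 e) = 0)
    (hdAg : ∀ e, dA (gA e) = 0) (hdAgs : ∀ e, dA (gsA e) = 0)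
    -- the n-dimensional Ginzburg algebra 𝒢*_n(Q)
    (idem : V → AG) (g : E → AG) (gs : E → AG) (h : V → AG)
    (hidemdeg : ∀ v, idem v ∈ 𝒢 0)
    (hgdeg : ∀ e, g e ∈ 𝒢 0) (hgsdeg : ∀ e, gs e ∈ 𝒢 (2 - n))
    (hhdeg : ∀ v, h v ∈ 𝒢 (1 - n))
    (hgenG : Algebra.adjoin k
        (Set.range idem ∪ Set.range g ∪ Set.range gs ∪ Set.range h) = ⊤)
    (dG : AG →ₗ[k] AG)
    (hdGDeg : ∀ i : ℤ, ∀ x ∈ 𝒢 i, dG x ∈ 𝒢 (i + 1))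
    (hLeibG : ∀ (i : ℤ) (x y : AG), x ∈ 𝒢 i →
        dG (x * y) = dG x * y + (Int.negOnePow i : ℤ) • (x * dG y))
    (hdGidem : ∀ v, dG (idem v) = 0)
    (hdGg : ∀ e, dG (g e) = 0) (hdGgs : ∀ e, dG (gs e) = 0)
    (hdGh : ∀ v, dG (h v) =
        (∑ e ∈ Finset.univ.filter (fun e => s e = v), g e * gs e) -
        (∑ e ∈ Finset.univ.filter (fun e => t e = v), gs e * g e))
    -- the map τ : 𝒜 → 𝒢*_n(Q), determined by its values on generators
    (τ : AA →ₐ[k] AG)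
    (hτidem : ∀ v, τ (idemA v) = idem v)
    (hτa : ∀ v, τ (a v) = h v)
    (hτa1 : ∀ e, τ (a1 e) = 0) (hτa2 : ∀ e, τ (a2 e) = 0)
    (hτb1 : ∀ e, τ (b1 e) = g e * gs e)
    (hτb2 : ∀ e, τ (b2 e) = -(gs e * g e))
    (hτg : ∀ e, τ (gA e) = g e) (hτgs : ∀ e, τ (gsA e) = gs e)
    -- the map φ : 𝒢*_n(Q) → 𝒜, determined by its values on generators
    (φ : AG →ₐ[k] AA)
    (hφidem : ∀ v, φ (idem v) = idemA v)
    (hφh : ∀ v, φ (h v) = a v -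
        ((∑ e ∈ Finset.univ.filter (fun e => s e = v), a1 e) +
         (∑ e ∈ Finset.univ.filter (fun e => t e = v), a2 e)))
    (hφg : ∀ e, φ (g e) = gA e) (hφgs : ∀ e, φ (gs e) = gsA e)
    -- the homotopy K, determined by its values on generators
    (K : AA →ₗ[k] AA)
    (hKDeg : ∀ i : ℤ, ∀ x ∈ 𝒜 i, K x ∈ 𝒜 (i - 1))
    (hKb1 : ∀ e, K (b1 e) = a1 e) (hKb2 : ∀ e, K (b2 e) = a2 e)
    (hKidem : ∀ v, K (idemA v) = 0) (hKa : ∀ v, K (a v) = 0)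
    (hKa1 : ∀ e, K (a1 e) = 0) (hKa2 : ∀ e, K (a2 e) = 0)
    (hKg : ∀ e, K (gA e) = 0) (hKgs : ∀ e, K (gsA e) = 0)
    (hKder : ∀ (i : ℤ) (x y : AA), x ∈ 𝒜 i →
        K (x * y) = K x * φ (τ y) + (Int.negOnePow i : ℤ) • (x * K y))
    :
    ∀ x : AA, dA (K x) + K (dA x) = x - φ (τ x) := by
  classical
  have key : ∀ z ∈ Submonoid.closure
      (Set.range idemA ∪ Set.range a ∪ Set.range a1 ∪ Set.range a2 ∪
        Set.range b1 ∪ Set.range b2 ∪ Set.range gA ∪ Set.range gsA),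
      ∃ i : ℤ, z ∈ 𝒜 i ∧ φ (τ z) ∈ 𝒜 i ∧
        dA (φ (τ z)) = φ (τ (dA z)) ∧ dA (K z) + K (dA z) = z - φ (τ z) := by
    intro z hz
    induction hz using Submonoid.closure_induction with
    | one =>
      have h1 : (1 : AA) ∈ 𝒜 0 := SetLike.one_mem_graded 𝒜
      have hd1 : dA (1 : AA) = 0 := by
        have h := hLeibA 0 1 1 h1
        simp only [one_mul, mul_one, Int.negOnePow_zero, Units.val_one, one_smul] at h
        exact (left_eq_add.mp h)
      have hK1 : K (1 : AA) = 0 := by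
        have h := hKder 0 1 1 h1
        simp only [one_mul, mul_one, map_one, Int.negOnePow_zero, Units.val_one,
          one_smul] at h
        exact (left_eq_add.mp h)
      exact ⟨0, h1, by simpa using h1, by simp [hd1], by simp [hd1, hK1]⟩
    | mem w hw =>
      have hdgg : ∀ e, dA (gA e * gsA e) = 0 := by
        intro e
        rw [hLeibA 0 (gA e) (gsA e) (hgAdeg e)]
        simp [hdAg, hdAgs]
      have hdgg' : ∀ e, dA (gsA e * gA e) = 0 := by
        intro e
        rw [hLeibA (2 - n) (gsA e) (gA e) (hgsAdeg e)]
        simp [hdAg, hdAgs]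
      have hKgg : ∀ e, K (gA e * gsA e) = 0 := by
        intro e
        rw [hKder 0 (gA e) (gsA e) (hgAdeg e)]
        simp [hKg, hKgs]
      have hKgg' : ∀ e, K (gsA e * gA e) = 0 := by
        intro e
        rw [hKder (2 - n) (gsA e) (gA e) (hgsAdeg e)]
        simp [hKg, hKgs]
      simp only [Set.mem_union, Set.mem_range] at hw
      rcases hw with (((((((⟨v, rfl⟩ | ⟨v, rfl⟩) | ⟨e, rfl⟩) | ⟨e, rfl⟩) | ⟨e, rfl⟩) |
        ⟨e, rfl⟩) | ⟨e, rfl⟩) | ⟨e, rfl⟩)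
      · -- idemA
        exact ⟨0, hidemAdeg v, by simp [hτidem, hφidem, hidemAdeg v],
          by simp [hτidem, hφidem, hdAidem],
          by simp [hτidem, hφidem, hdAidem, hKidem]⟩
      · -- a
        refine ⟨1 - n, hadeg v, ?_, ?_, ?_⟩
        · rw [hτa, hφh]
          exact sub_mem (hadeg v) (add_mem
            (Submodule.sum_mem _ fun e _ => ha1deg e)
            (Submodule.sum_mem _ fun e _ => ha2deg e))
        · rw [hτa, hφh, hdAa]
          simp only [map_sub, map_add, map_sum, hdAa, hdAa1, hdAa2, hτb1, hτb2,
            map_mul, map_neg, hφg, hφgs, Finset.sum_sub_distrib,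
            Finset.sum_add_distrib, Finset.sum_neg_distrib, neg_smul, one_smul]
          abel
        · rw [hKa, hdAa]
          simp only [map_add, map_sum, hKb1, hKb2, hτa, hφh, map_zero, zero_add]
          abel
      · -- a1
        refine ⟨1 - n, ha1deg e, by simp [hτa1], ?_, ?_⟩
        · simp [hτa1, hdAa1, map_sub, hτb1, map_mul, hτg, hτgs, hφg, hφgs]
        · rw [hKa1, hdAa1, map_sub, hKb1, hKgg e]
          simp [hτa1]
      · -- a2
        refine ⟨1 - n, ha2deg e, by simp [hτa2], ?_, ?_⟩
        · simp [hτa2, hdAa2, map_add, hτb2, map_mul, hτg, hτgs, hφg, hφgs]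
        · rw [hKa2, hdAa2, map_add, hKb2, hKgg' e]
          simp [hτa2]
      · -- b1
        refine ⟨2 - n, hb1deg e, ?_, ?_, ?_⟩
        · rw [hτb1, map_mul, hφg, hφgs]
          simpa using SetLike.mul_mem_graded (hgAdeg e) (hgsAdeg e)
        · rw [hτb1, map_mul, hφg, hφgs, hdAb1, hdgg e]
          simp
        · rw [hKb1, hdAa1, hdAb1, hτb1, map_mul, hφg, hφgs]
          simp
      · -- b2
        refine ⟨2 - n, hb2deg e, ?_, ?_, ?_⟩
        · rw [hτb2, map_neg, map_mul, hφgs, hφg]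
          simpa using neg_mem (SetLike.mul_mem_graded (hgsAdeg e) (hgAdeg e))
        · rw [hτb2, map_neg, map_mul, hφgs, hφg, hdAb2, map_neg, hdgg' e]
          simp
        · rw [hKb2, hdAa2, hdAb2, hτb2, map_neg, map_mul, hφgs, hφg]
          simp [sub_neg_eq_add]
      · -- gA
        exact ⟨0, hgAdeg e, by simp [hτg, hφg, hgAdeg e],
          by simp [hτg, hφg, hdAg], by simp [hτg, hφg, hdAg, hKg]⟩
      · -- gsA
        exact ⟨2 - n, hgsAdeg e, by simp [hτgs, hφgs, hgsAdeg e],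
          by simp [hτgs, hφgs, hdAgs], by simp [hτgs, hφgs, hdAgs, hKgs]⟩
    | mul x y hxc hyc hQx hQy =>
      obtain ⟨i, hxi, hCxi, hchx, hPx⟩ := hQx
      obtain ⟨j, hyj, hCyj, hchy, hPy⟩ := hQy
      refine ⟨i + j, SetLike.mul_mem_graded hxi hyj, ?_, ?_, ?_⟩
      · rw [map_mul, map_mul]
        exact SetLike.mul_mem_graded hCxi hCyj
      · calc dA (φ (τ (x * y))) = dA (φ (τ x) * φ (τ y)) := by rw [map_mul, map_mul]
          _ = φ (τ (dA x)) * φ (τ y) +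
              (Int.negOnePow i : ℤ) • (φ (τ x) * φ (τ (dA y))) := by
            rw [hLeibA i (φ (τ x)) (φ (τ y)) hCxi, hchx, hchy]
          _ = φ (τ (dA (x * y))) := by
            rw [hLeibA i x y hxi]
            simp [map_add, map_zsmul, map_mul]
      · have hKxy := hKder i x y hxi
        have hdxy := hLeibA i x y hxi
        have hKd1 := hKder (i + 1) (dA x) y (hdADeg i x hxi)
        have hKd2 := hKder i x (dA y) hxi
        have hdK1 := hLeibA (i - 1) (K x) (φ (τ y)) (hKDeg i x hxi)
        have hdK2 := hLeibA i x (K y) hxi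
        have hi1 : ((i + 1).negOnePow : ℤ) = -(i.negOnePow : ℤ) := by
          rw [Int.negOnePow_succ]; push_cast; ring
        have hi2 : ((i - 1).negOnePow : ℤ) = -(i.negOnePow : ℤ) := by
          have h := Int.negOnePow_succ (i - 1)
          rw [sub_add_cancel] at h
          rw [h]; push_cast; ring
        rcases Int.even_or_odd i with hpar | hpar
        · have hsgn : (Int.negOnePow i : ℤ) = 1 := by
            rw [Int.negOnePow_even i hpar]; rfl
          simp only [hi1, hi2, hsgn, one_smul, neg_one_smul, neg_neg, ← sub_eq_add_neg] at hKxy hdxy hKd1 hKd2 hdK1 hdK2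
          rw [map_mul τ, map_mul φ, hKxy, hdxy, map_add dA, map_add K, hdK1, hdK2,
            hKd1, hKd2, hchy]
          trans ((dA (K x) + K (dA x)) * φ (τ y) + x * (dA (K y) + K (dA y)))
          · noncomm_ring
          · rw [hPx, hPy]; noncomm_ring
        · have hsgn : (Int.negOnePow i : ℤ) = -1 := by
            rw [Int.negOnePow_odd i hpar]; rfl
          simp only [hi1, hi2, hsgn, one_smul, neg_one_smul, neg_neg, ← sub_eq_add_neg] at hKxy hdxy hKd1 hKd2 hdK1 hdK2
          rw [map_mul τ, map_mul φ, hKxy, hdxy, map_sub dA, map_sub K, hdK1, hdK2,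
            hKd1, hKd2, hchy]
          trans ((dA (K x) + K (dA x)) * φ (τ y) + x * (dA (K y) + K (dA y)))
          · noncomm_ring
          · rw [hPx, hPy]; noncomm_ring
  intro z
  have htop : Submodule.span k
      ((Submonoid.closure (Set.range idemA ∪ Set.range a ∪ Set.range a1 ∪
          Set.range a2 ∪ Set.range b1 ∪ Set.range b2 ∪ Set.range gA ∪
          Set.range gsA) : Submonoid AA) : Set AA) = ⊤ := by
    rw [← Algebra.adjoin_eq_span, hgenA]
    simp
  have hz : z ∈ Submodule.span k
      ((Submonoid.closure (Set.range idemA ∪ Set.range a ∪ Set.range a1 ∪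
          Set.range a2 ∪ Set.range b1 ∪ Set.range b2 ∪ Set.range gA ∪
          Set.range gsA) : Submonoid AA) : Set AA) := by
    rw [htop]; trivial
  induction hz using Submodule.span_induction with
  | mem w hw => obtain ⟨i, _, _, _, hP⟩ := key w hw; exact hP
  | zero => simp
  | add u v _ _ hu hv =>
    simp only [map_add]
    rw [add_sub_add_comm, ← hu, ← hv]
    abel
  | smul c u _ hu =>
    simp only [map_smul, ← smul_sub, ← hu, smul_add]
end

section
/- With ℬ, σ, ε as above, define J : ℬ → ℬ of degree −1 on generators by J(d_{e,v}) = a'_{e,v} and J(x) = 0 for all other generators, extended by linearity and as an (id, εσ)-derivation. Then ∂J + J∂ = id − εσ on ℬ, i.e. εσ is chain homotopic to the identity, so σ is a quasi-isomorphism. -/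
/-!
The difference `∂J + J∂ − (id − εσ)` is linear, and the set where it vanishes contains `1` and is
closed under left multiplication by homogeneous elements: expanding `∂J + J∂` on `xy` with the
Leibniz rules, the cross terms cancel in pairs because the signs `(−1)^{|x|±1}` are opposite to
`(−1)^{|x|}` and `∂(εσ) = (εσ)∂`, leaving `(x − εσx)·εσy + x·(y − εσy) = xy − εσ(xy)`. So the
identity only has to be checked on the generators of `ℬ`. On cohomology, a cocycle `x` with
`σx = ∂w` is `∂(Jx + εw)`, and `ε` is a chain-level section of `σ`.
-/

theorem adjoin_toSubmodule_le_of_one_mem_of_mul_mem {R A : Type*} [CommSemiring R] [Semiring A]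
    [Algebra R A] {S : Set A} {M : Submodule R A} (h1 : (1 : A) ∈ M)
    (hS : ∀ s ∈ S, ∀ m ∈ M, s * m ∈ M) : Subalgebra.toSubmodule (Algebra.adjoin R S) ≤ M := by
  intro x hx
  suffices ∀ m ∈ M, x * m ∈ M by simpa using this 1 h1
  induction hx using Algebra.adjoin_induction with
  | mem s hs => exact hS s hs
  | algebraMap r => exact fun m hm => Algebra.smul_def r m ▸ M.smul_mem r hm
  | add x y _ _ hx hy => exact fun m hm => (add_mul x y m).symm ▸ M.add_mem (hx m hm) (hy m hm)
  | mul x y _ _ hx hy => exact fun m hm => (mul_assoc x y m).symm ▸ hx _ (hy m hm)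

section Homotopy

variable {k A : Type*} [CommRing k] [Ring A] [Algebra k A]

def homotopyLocus (d J : A →ₗ[k] A) (φ : A →ₐ[k] A) : Submodule k A :=
  (d ∘ₗ J + J ∘ₗ d).eqLocus (LinearMap.id - φ.toLinearMap)

@[simp]
theorem mem_homotopyLocus {d J : A →ₗ[k] A} {φ : A →ₐ[k] A} {x : A} :
    x ∈ homotopyLocus d J φ ↔ d (J x) + J (d x) = x - φ x :=
  Iff.rfl

variable {ℬ : ℤ → Submodule k A} {d J : A →ₗ[k] A} {φ : A →ₐ[k] A}

theorem one_mem_homotopyLocus (h1 : (1 : A) ∈ ℬ 0)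
    (hd : ∀ (i : ℤ) (x y : A), x ∈ ℬ i → d (x * y) = d x * y + (Int.negOnePow i : ℤ) • (x * d y))
    (hJ : ∀ (i : ℤ) (x y : A), x ∈ ℬ i → J (x * y) = J x * φ y + (Int.negOnePow i : ℤ) • (x * J y)) :
    (1 : A) ∈ homotopyLocus d J φ := by
  have hd1 : d 1 = 0 := by simpa using hd 0 1 1 h1
  have hJ1 : J 1 = 0 := by simpa using hJ 0 1 1 h1
  simp [hd1, hJ1]

theorem mul_mem_homotopyLocus
    (hdDeg : ∀ i : ℤ, ∀ x ∈ ℬ i, d x ∈ ℬ (i + 1))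
    (hJDeg : ∀ i : ℤ, ∀ x ∈ ℬ i, J x ∈ ℬ (i - 1))
    (hd : ∀ (i : ℤ) (x y : A), x ∈ ℬ i → d (x * y) = d x * y + (Int.negOnePow i : ℤ) • (x * d y))
    (hJ : ∀ (i : ℤ) (x y : A), x ∈ ℬ i → J (x * y) = J x * φ y + (Int.negOnePow i : ℤ) • (x * J y))
    (hφ : ∀ x, d (φ x) = φ (d x)) {i : ℤ} {x y : A} (hxi : x ∈ ℬ i)
    (hx : x ∈ homotopyLocus d J φ) (hy : y ∈ homotopyLocus d J φ) :
    x * y ∈ homotopyLocus d J φ := by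
  rw [mem_homotopyLocus] at *
  have hc : (Int.negOnePow i : ℤ) * Int.negOnePow i = 1 := by simp [← Units.val_mul]
  have hsucc : (Int.negOnePow (i + 1) : ℤ) = -Int.negOnePow i := by simp [Int.negOnePow_succ]
  have hpred : (Int.negOnePow (i - 1) : ℤ) = -Int.negOnePow i := by simp [Int.negOnePow_sub]
  rw [hd i x y hxi, hJ i x y hxi, map_add, map_add, map_zsmul, map_zsmul,
    hJ (i + 1) _ _ (hdDeg i x hxi), hd (i - 1) _ _ (hJDeg i x hxi), hJ i _ _ hxi, hd i _ _ hxi,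
    hsucc, hpred, hφ, map_mul, eq_sub_of_add_eq hx, eq_sub_of_add_eq hy]
  simp only [smul_add, smul_smul, hc, one_smul, sub_mul, mul_sub, neg_smul]
  abel

end Homotopy

section Cohomology

variable {k B G : Type*} [Ring k] [AddCommGroup B] [Module k B] [AddCommGroup G] [Module k G]
  {dB J : B →ₗ[k] B} {dG : G →ₗ[k] G} {σ : B →ₗ[k] G} {ε : G →ₗ[k] B}

theorem mem_range_of_map_mem_range_of_homotopy (hε : ∀ z, ε (dG z) = dB (ε z))
    (hJ : ∀ x, dB (J x) + J (dB x) = x - ε (σ x)) {x : B} (hx : dB x = 0)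
    (hσx : σ x ∈ LinearMap.range dG) : x ∈ LinearMap.range dB := by
  obtain ⟨w, hw⟩ := hσx
  refine ⟨J x + ε w, ?_⟩
  have := hJ x
  rw [hx, map_zero, add_zero] at this
  rw [map_add, this, ← hε, hw, sub_add_cancel]

theorem exists_cocycle_map_sub_mem_range (hε : ∀ z, ε (dG z) = dB (ε z))
    (hσε : ∀ z, σ (ε z) = z) {z : G} (hz : dG z = 0) :
    ∃ x, dB x = 0 ∧ σ x - z ∈ LinearMap.range dG :=
  ⟨ε z, by rw [← hε, hz, map_zero], by rw [hσε, sub_self]; exact zero_mem _⟩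

end Cohomology

theorem J_is_chain_homotopy_and_sigma_qiso_general
    {k BB AG : Type*} [Field k] [Ring BB] [Algebra k BB] [Ring AG] [Algebra k AG]
    (ℬ : ℤ → Submodule k BB) [GradedAlgebra ℬ]
    (n : ℤ)
    (V E : Type*) [Fintype E] [DecidableEq V]
    (s t : E → V)
    -- the dg-algebra ℬ
    (idemB : V → BB) (b : V → BB) (a1' a2' d1 d2 hB hsB : E → BB)
    (hidemBdeg : ∀ v, idemB v ∈ ℬ 0)
    (hbdeg : ∀ v, b v ∈ ℬ (2 - n))
    (ha1'deg : ∀ e, a1' e ∈ ℬ (2 - n)) (ha2'deg : ∀ e, a2' e ∈ ℬ (2 - n))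
    (hd1deg : ∀ e, d1 e ∈ ℬ (3 - n)) (hd2deg : ∀ e, d2 e ∈ ℬ (3 - n))
    (hhBdeg : ∀ e, hB e ∈ ℬ 0) (hhsBdeg : ∀ e, hsB e ∈ ℬ (3 - n))
    (hgenB : Algebra.adjoin k
        (Set.range idemB ∪ Set.range b ∪ Set.range a1' ∪ Set.range a2' ∪
          Set.range d1 ∪ Set.range d2 ∪ Set.range hB ∪ Set.range hsB) = ⊤)
    (dB : BB →ₗ[k] BB)
    (hdBDeg : ∀ i : ℤ, ∀ x ∈ ℬ i, dB x ∈ ℬ (i + 1))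
    (hLeibB : ∀ (i : ℤ) (x y : BB), x ∈ ℬ i →
        dB (x * y) = dB x * y + (Int.negOnePow i : ℤ) • (x * dB y))
    (hdBidem : ∀ v, dB (idemB v) = 0)
    (hdBb : ∀ v, dB (b v) =
        (∑ e ∈ Finset.univ.filter (fun e => s e = v), d1 e) +
        (∑ e ∈ Finset.univ.filter (fun e => t e = v), d2 e))
    (hdBa1' : ∀ e, dB (a1' e) = d1 e - hB e * hsB e)
    (hdBa2' : ∀ e, dB (a2' e) = d2 e + hsB e * hB e)
    (hdBd1 : ∀ e, dB (d1 e) = 0) (hdBd2 : ∀ e, dB (d2 e) = 0)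
    (hdBh : ∀ e, dB (hB e) = 0) (hdBhs : ∀ e, dB (hsB e) = 0)
    -- the (n-1)-dimensional Ginzburg algebra 𝒢*_{n-1}(F)
    (idem : V → AG) (gT : E → AG) (gsT : E → AG) (hT : V → AG)
    (dG : AG →ₗ[k] AG)
    -- the map σ : ℬ → 𝒢*_{n-1}(F), determined by its values on generators
    (σ : BB →ₐ[k] AG)
    (hσidem : ∀ v, σ (idemB v) = idem v)
    (hσb : ∀ v, σ (b v) = hT v)
    (hσa1' : ∀ e, σ (a1' e) = 0) (hσa2' : ∀ e, σ (a2' e) = 0)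
    (hσd1 : ∀ e, σ (d1 e) = gT e * gsT e)
    (hσd2 : ∀ e, σ (d2 e) = -(gsT e * gT e))
    (hσh : ∀ e, σ (hB e) = gT e) (hσhs : ∀ e, σ (hsB e) = gsT e)
    -- the map ε : 𝒢*_{n-1}(F) → ℬ, determined by its values on generators
    (ε : AG →ₐ[k] BB)
    (hεidem : ∀ v, ε (idem v) = idemB v)
    (hεh : ∀ v, ε (hT v) = b v -
        ((∑ e ∈ Finset.univ.filter (fun e => s e = v), a1' e) +
         (∑ e ∈ Finset.univ.filter (fun e => t e = v), a2' e)))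
    (hεg : ∀ e, ε (gT e) = hB e) (hεgs : ∀ e, ε (gsT e) = hsB e)
    (hεChain : ∀ x : AG, ε (dG x) = dB (ε x))
    (hσChain : ∀ x : BB, σ (dB x) = dG (σ x))
    (hσε : ∀ x : AG, σ (ε x) = x)
    -- the homotopy J, determined by its values on generators
    (J : BB →ₗ[k] BB)
    (hJDeg : ∀ i : ℤ, ∀ x ∈ ℬ i, J x ∈ ℬ (i - 1))
    (hJd1 : ∀ e, J (d1 e) = a1' e) (hJd2 : ∀ e, J (d2 e) = a2' e)
    (hJidem : ∀ v, J (idemB v) = 0) (hJb : ∀ v, J (b v) = 0)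
    (hJa1' : ∀ e, J (a1' e) = 0) (hJa2' : ∀ e, J (a2' e) = 0)
    (hJh : ∀ e, J (hB e) = 0) (hJhs : ∀ e, J (hsB e) = 0)
    (hJder : ∀ (i : ℤ) (x y : BB), x ∈ ℬ i →
        J (x * y) = J x * ε (σ y) + (Int.negOnePow i : ℤ) • (x * J y))
    :
    (∀ x : BB, dB (J x) + J (dB x) = x - ε (σ x)) ∧
    -- σ is a quasi-isomorphism: injective and surjective on cohomology
    (∀ x : BB, dB x = 0 → σ x ∈ LinearMap.range dG → x ∈ LinearMap.range dB) ∧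
    (∀ z : AG, dG z = 0 → ∃ x : BB, dB x = 0 ∧ σ x - z ∈ LinearMap.range dG) := by
  set φ := ε.comp σ
  have hφ : ∀ x, dB (φ x) = φ (dB x) := fun x => by simp [φ, ← hεChain, hσChain]
  have hJφ : ∀ (i : ℤ) (x y : BB), x ∈ ℬ i →
      J (x * y) = J x * φ y + (Int.negOnePow i : ℤ) • (x * J y) := hJder
  have hgen : ∀ {i : ℤ} {g : BB}, g ∈ ℬ i → dB (J g) + J (dB g) = g - ε (σ g) →
      ∀ m ∈ homotopyLocus dB J φ, g * m ∈ homotopyLocus dB J φ := fun hg hgJ _ hm =>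
    mul_mem_homotopyLocus hdBDeg hJDeg hLeibB hJφ hφ hg hgJ hm
  have hJhhs : ∀ e, J (hB e * hsB e) = 0 := fun e => by
    rw [hJder 0 _ _ (hhBdeg e), hJh, hJhs]; simp
  have hJhsh : ∀ e, J (hsB e * hB e) = 0 := fun e => by
    rw [hJder (3 - n) _ _ (hhsBdeg e), hJhs, hJh]; simp
  have homotopy : ∀ x, dB (J x) + J (dB x) = x - ε (σ x) := by
    intro x
    refine mem_homotopyLocus.mp <| adjoin_toSubmodule_le_of_one_mem_of_mul_mem
      (one_mem_homotopyLocus SetLike.GradedOne.one_mem hLeibB hJφ) ?_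
      (hgenB.symm ▸ Algebra.mem_top)
    rintro g (((((((⟨v, rfl⟩ | ⟨v, rfl⟩) | ⟨e, rfl⟩) | ⟨e, rfl⟩) | ⟨e, rfl⟩) |
      ⟨e, rfl⟩) | ⟨e, rfl⟩) | ⟨e, rfl⟩)
    · exact hgen (hidemBdeg v) (by simp [hJidem, hdBidem, hσidem, hεidem])
    · exact hgen (hbdeg v) (by simp [hJb, hdBb, hσb, hεh, map_sum, hJd1, hJd2])
    · exact hgen (ha1'deg e) (by simp [hJa1', hdBa1', hσa1', hJhhs, hJd1])
    · exact hgen (ha2'deg e) (by simp [hJa2', hdBa2', hσa2', hJhsh, hJd2])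
    · exact hgen (hd1deg e) (by simp [hJd1, hdBd1, hdBa1', hσd1, hεg, hεgs])
    · exact hgen (hd2deg e) (by simp [hJd2, hdBd2, hdBa2', hσd2, hεg, hεgs])
    · exact hgen (hhBdeg e) (by simp [hJh, hdBh, hσh, hεg])
    · exact hgen (hhsBdeg e) (by simp [hJhs, hdBhs, hσhs, hεgs])
  exact ⟨homotopy,
    fun _ hx hσx => mem_range_of_map_mem_range_of_homotopy (σ := σ.toLinearMap)
      (ε := ε.toLinearMap) hεChain homotopy hx hσx,
    fun _ hz => exists_cocycle_map_sub_mem_range (σ := σ.toLinearMap) (ε := ε.toLinearMap)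
      hεChain hσε hz⟩

/-- With `ℬ`, `σ`, `ε` as in Statements 6 and 7, let `J : ℬ → ℬ` be the
degree `-1` linear map determined on generators by `J(d_{e,v}) = a'_{e,v}` and `J = 0` on
all other generators, extended as an `(id, εσ)`-derivation
`J(xy) = J(x)·(εσ)(y) + (−1)^{|x|} x·J(y)`.  Then `∂J + J∂ = id − εσ` on `ℬ`, i.e. `εσ` is
chain homotopic to the identity; consequently `σ` is a quasi-isomorphism (it induces an
injection and a surjection on cohomology). -/
theorem J_is_chain_homotopy_and_sigma_qiso
    {k BB AG : Type*} [Field k] [Ring BB] [Algebra k BB] [Ring AG] [Algebra k AG]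
    (ℬ : ℤ → Submodule k BB) [GradedAlgebra ℬ]
    (𝒢 : ℤ → Submodule k AG) [GradedAlgebra 𝒢] (n : ℤ)
    (V E : Type*) [Fintype E] [DecidableEq V]
    (s t : E → V)
    -- the dg-algebra ℬ
    (idemB : V → BB) (b : V → BB) (a1' a2' d1 d2 hB hsB : E → BB)
    (hidemBdeg : ∀ v, idemB v ∈ ℬ 0)
    (hbdeg : ∀ v, b v ∈ ℬ (2 - n))
    (ha1'deg : ∀ e, a1' e ∈ ℬ (2 - n)) (ha2'deg : ∀ e, a2' e ∈ ℬ (2 - n))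
    (hd1deg : ∀ e, d1 e ∈ ℬ (3 - n)) (hd2deg : ∀ e, d2 e ∈ ℬ (3 - n))
    (hhBdeg : ∀ e, hB e ∈ ℬ 0) (hhsBdeg : ∀ e, hsB e ∈ ℬ (3 - n))
    (hgenB : Algebra.adjoin k
        (Set.range idemB ∪ Set.range b ∪ Set.range a1' ∪ Set.range a2' ∪
          Set.range d1 ∪ Set.range d2 ∪ Set.range hB ∪ Set.range hsB) = ⊤)
    (dB : BB →ₗ[k] BB)
    (hdBDeg : ∀ i : ℤ, ∀ x ∈ ℬ i, dB x ∈ ℬ (i + 1))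
    (hLeibB : ∀ (i : ℤ) (x y : BB), x ∈ ℬ i →
        dB (x * y) = dB x * y + (Int.negOnePow i : ℤ) • (x * dB y))
    (hdBidem : ∀ v, dB (idemB v) = 0)
    (hdBb : ∀ v, dB (b v) =
        (∑ e ∈ Finset.univ.filter (fun e => s e = v), d1 e) +
        (∑ e ∈ Finset.univ.filter (fun e => t e = v), d2 e))
    (hdBa1' : ∀ e, dB (a1' e) = d1 e - hB e * hsB e)
    (hdBa2' : ∀ e, dB (a2' e) = d2 e + hsB e * hB e)
    (hdBd1 : ∀ e, dB (d1 e) = 0) (hdBd2 : ∀ e, dB (d2 e) = 0)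
    (hdBh : ∀ e, dB (hB e) = 0) (hdBhs : ∀ e, dB (hsB e) = 0)
    -- the (n-1)-dimensional Ginzburg algebra 𝒢*_{n-1}(F)
    (idem : V → AG) (gT : E → AG) (gsT : E → AG) (hT : V → AG)
    (hidemdeg : ∀ v, idem v ∈ 𝒢 0)
    (hgTdeg : ∀ e, gT e ∈ 𝒢 0) (hgsTdeg : ∀ e, gsT e ∈ 𝒢 (3 - n))
    (hhTdeg : ∀ v, hT v ∈ 𝒢 (2 - n))
    (hgenG : Algebra.adjoin k
        (Set.range idem ∪ Set.range gT ∪ Set.range gsT ∪ Set.range hT) = ⊤)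
    (dG : AG →ₗ[k] AG)
    (hdGDeg : ∀ i : ℤ, ∀ x ∈ 𝒢 i, dG x ∈ 𝒢 (i + 1))
    (hLeibG : ∀ (i : ℤ) (x y : AG), x ∈ 𝒢 i →
        dG (x * y) = dG x * y + (Int.negOnePow i : ℤ) • (x * dG y))
    (hdGidem : ∀ v, dG (idem v) = 0)
    (hdGg : ∀ e, dG (gT e) = 0) (hdGgs : ∀ e, dG (gsT e) = 0)
    (hdGh : ∀ v, dG (hT v) =
        (∑ e ∈ Finset.univ.filter (fun e => s e = v), gT e * gsT e) -
        (∑ e ∈ Finset.univ.filter (fun e => t e = v), gsT e * gT e))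
    -- the map σ : ℬ → 𝒢*_{n-1}(F), determined by its values on generators
    (σ : BB →ₐ[k] AG)
    (hσidem : ∀ v, σ (idemB v) = idem v)
    (hσb : ∀ v, σ (b v) = hT v)
    (hσa1' : ∀ e, σ (a1' e) = 0) (hσa2' : ∀ e, σ (a2' e) = 0)
    (hσd1 : ∀ e, σ (d1 e) = gT e * gsT e)
    (hσd2 : ∀ e, σ (d2 e) = -(gsT e * gT e))
    (hσh : ∀ e, σ (hB e) = gT e) (hσhs : ∀ e, σ (hsB e) = gsT e)
    -- the map ε : 𝒢*_{n-1}(F) → ℬ, determined by its values on generators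
    (ε : AG →ₐ[k] BB)
    (hεidem : ∀ v, ε (idem v) = idemB v)
    (hεh : ∀ v, ε (hT v) = b v -
        ((∑ e ∈ Finset.univ.filter (fun e => s e = v), a1' e) +
         (∑ e ∈ Finset.univ.filter (fun e => t e = v), a2' e)))
    (hεg : ∀ e, ε (gT e) = hB e) (hεgs : ∀ e, ε (gsT e) = hsB e)
    (hεChain : ∀ x : AG, ε (dG x) = dB (ε x))
    (hσChain : ∀ x : BB, σ (dB x) = dG (σ x))
    (hσε : ∀ x : AG, σ (ε x) = x)
    -- the homotopy J, determined by its values on generators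
    (J : BB →ₗ[k] BB)
    (hJDeg : ∀ i : ℤ, ∀ x ∈ ℬ i, J x ∈ ℬ (i - 1))
    (hJd1 : ∀ e, J (d1 e) = a1' e) (hJd2 : ∀ e, J (d2 e) = a2' e)
    (hJidem : ∀ v, J (idemB v) = 0) (hJb : ∀ v, J (b v) = 0)
    (hJa1' : ∀ e, J (a1' e) = 0) (hJa2' : ∀ e, J (a2' e) = 0)
    (hJh : ∀ e, J (hB e) = 0) (hJhs : ∀ e, J (hsB e) = 0)
    (hJder : ∀ (i : ℤ) (x y : BB), x ∈ ℬ i →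
        J (x * y) = J x * ε (σ y) + (Int.negOnePow i : ℤ) • (x * J y))
    :
    (∀ x : BB, dB (J x) + J (dB x) = x - ε (σ x)) ∧
    -- σ is a quasi-isomorphism: injective and surjective on cohomology
    (∀ x : BB, dB x = 0 → σ x ∈ LinearMap.range dG → x ∈ LinearMap.range dB) ∧
    (∀ z : AG, dG z = 0 → ∃ x : BB, dB x = 0 ∧ σ x - z ∈ LinearMap.range dG) :=
  J_is_chain_homotopy_and_sigma_qiso_general ℬ n V E s t idemB b a1' a2' d1 d2 hB hsB hidemBdeg
    hbdeg ha1'deg ha2'deg hd1deg hd2deg hhBdeg hhsBdeg hgenB dB hdBDeg hLeibB hdBidem hdBb hdBa1'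
    hdBa2' hdBd1 hdBd2 hdBh hdBhs idem gT gsT hT dG σ hσidem hσb hσa1' hσa2' hσd1 hσd2 hσh hσhs ε
    hεidem hεh hεg hεgs hεChain hσChain hσε J hJDeg hJd1 hJd2 hJidem hJb hJa1' hJa2' hJh hJhs hJder
end
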